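/- arXiv:nlin/0201060 — 3 statements merged into one kernel-verified Lean document; each statement's English description precedes it below -/
import Mathlib

section
/- Let v : ℝ × ℝⁿ → ℝⁿ be a C¹ time-dependent vector field and let g : ℝ × ℝⁿ → (symmetric continuous bilinear forms on ℝⁿ) be C¹. Let s : ℝ → ℝⁿ be a solution of the dynamic equation defined by v, and let s̄ : ℝ → ℝⁿ be a Jacobi field along s, i.e. a solution of the variation equation s̄'(t) = (D_x v)(t, s t) (s̄ t). Then for every t ∈ ℝ, the real-valued function t ↦ g(t, s t)(s̄ t, s̄ t) has derivative at t equal to L(t, s t)(s̄ t, s̄ t), where L is the covariant Lyapunov tensor of the pair (g, v). -/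
/-!
By the chain rule, `τ ↦ g(τ, s τ)` has derivative `∂ₜg + (D_x g)[v]` at `(t, s t)`, since
`s' = v(t, s t)`. The product rule for the bilinear form evaluated twice at `s̄ τ` adds
`g(s̄', s̄) + g(s̄, s̄')`, and the variation equation turns `s̄'` into `(D_x v) s̄`.
-/

open Function

variable {E : Type*} [NormedAddCommGroup E] [InnerProductSpace ℝ E]
  [FiniteDimensional ℝ E]

/-- `s` is a solution of the first order dynamic equation defined by the
time-dependent vector field `v`. -/
def IsSolution (v : ℝ → E → E) (s : ℝ → E) : Prop :=
  ∀ t : ℝ, HasDerivAt s (v t (s t)) t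

/-- `s̄` is a Jacobi field along the solution `s`, i.e. a solution
of the variation equation `s̄' t = (D_x v) (t, s t) (s̄ t)`. -/
def IsJacobiField (v : ℝ → E → E) (s sbar : ℝ → E) : Prop :=
  ∀ t : ℝ, HasDerivAt sbar (fderiv ℝ (v t) (s t) (sbar t)) t

/-- The covariant Lyapunov tensor of a time-dependent metric `g` and a
time-dependent vector field `v`:
`L(t,x)(u,w) = ∂ₜg(t,x)(u,w) + (D_x g)(t,x)[v(t,x)](u,w)
  + g(t,x)((D_x v)(t,x) u, w) + g(t,x)(u, (D_x v)(t,x) w)`. -/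
noncomputable def covLyapunov (g : ℝ → E → (E →L[ℝ] E →L[ℝ] ℝ)) (v : ℝ → E → E)
    (t : ℝ) (x u w : E) : ℝ :=
  deriv (fun τ => g τ x) t u w
    + fderiv ℝ (fun y => g t y) x (v t x) u w
    + g t x (fderiv ℝ (v t) x u) w
    + g t x u (fderiv ℝ (v t) x w)

theorem DifferentiableAt.hasDerivAt_uncurry_comp {V F : Type*} [NormedAddCommGroup V]
    [NormedSpace ℝ V] [NormedAddCommGroup F] [NormedSpace ℝ F] {f : ℝ → V → F} {γ : ℝ → V}
    {γ' : V} {t : ℝ} (hf : DifferentiableAt ℝ (uncurry f) (t, γ t)) (hγ : HasDerivAt γ γ' t) :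
    HasDerivAt (fun τ => f τ (γ τ)) (deriv (fun τ => f τ (γ t)) t + fderiv ℝ (f t) (γ t) γ') t := by
  set D := fderiv ℝ (uncurry f) (t, γ t)
  have hD : HasFDerivAt (uncurry f) D (t, γ t) := hf.hasFDerivAt
  have h_time : HasDerivAt (fun τ => f τ (γ t)) (D (1, 0)) t :=
    hD.comp_hasDerivAt (l := uncurry f) t ((hasDerivAt_id t).prodMk (hasDerivAt_const t (γ t)))
  have h_space : HasFDerivAt (f t) (D.comp (.inr ℝ ℝ V)) (γ t) :=
    hD.comp (γ t) (hasFDerivAt_prodMk_right t (γ t))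
  rw [h_time.deriv, h_space.fderiv, ContinuousLinearMap.comp_apply, ContinuousLinearMap.inr_apply,
    ← map_add, Prod.mk_add_mk, add_zero, zero_add]
  exact hD.comp_hasDerivAt t ((hasDerivAt_id t).prodMk hγ)

theorem HasDerivAt.clm_apply₂ {V W F : Type*} [NormedAddCommGroup V] [NormedSpace ℝ V]
    [NormedAddCommGroup W] [NormedSpace ℝ W] [NormedAddCommGroup F] [NormedSpace ℝ F]
    {B : ℝ → V →L[ℝ] W →L[ℝ] F} {B' : V →L[ℝ] W →L[ℝ] F} {u : ℝ → V} {u' : V} {w : ℝ → W}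
    {w' : W} {t : ℝ} (hB : HasDerivAt B B' t) (hu : HasDerivAt u u' t) (hw : HasDerivAt w w' t) :
    HasDerivAt (fun τ => B τ (u τ) (w τ))
      (B' (u t) (w t) + B t u' (w t) + B t (u t) w') t := by
  simpa only [add_apply] using (hB.clm_apply hu).clm_apply hw

theorem hasDerivAt_metric_jacobi_general
    (v : ℝ → E → E) (g : ℝ → E → (E →L[ℝ] E →L[ℝ] ℝ))
    (hg : ContDiff ℝ 1 (uncurry g))
    (s sbar : ℝ → E) (hs : IsSolution v s) (hsbar : IsJacobiField v s sbar) :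
    ∀ t : ℝ, HasDerivAt (fun τ => g τ (s τ) (sbar τ) (sbar τ))
      (covLyapunov g v t (s t) (sbar t) (sbar t)) t := by
  intro t
  have hg_along : HasDerivAt (fun τ => g τ (s τ))
      (deriv (fun τ => g τ (s t)) t + fderiv ℝ (g t) (s t) (v t (s t))) t :=
    (hg.differentiable one_ne_zero _).hasDerivAt_uncurry_comp (hs t)
  simpa only [covLyapunov, add_apply]
    using hg_along.clm_apply₂ (hsbar t) (hsbar t)

/-- Along a solution `s` and a Jacobi field `s̄`, the covariant Lyapunov tensor
computes the time derivative of `g(t, s t)(s̄ t, s̄ t)`. -/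
theorem hasDerivAt_metric_jacobi
    (v : ℝ → E → E) (g : ℝ → E → (E →L[ℝ] E →L[ℝ] ℝ))
    (hv : ContDiff ℝ 1 (uncurry v))
    (hg : ContDiff ℝ 1 (uncurry g))
    (hgsym : ∀ (t : ℝ) (x u w : E), g t x u w = g t x w u)
    (s sbar : ℝ → E) (hs : IsSolution v s) (hsbar : IsJacobiField v s sbar) :
    ∀ t : ℝ, HasDerivAt (fun τ => g τ (s τ) (sbar τ) (sbar τ))
      (covLyapunov g v t (s t) (sbar t) (sbar t)) t :=
  hasDerivAt_metric_jacobi_general v g hg s sbar hs hsbar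
end

section
/- Let v : ℝ × ℝⁿ → ℝⁿ be a C¹ time-dependent vector field, locally Lipschitz in the space variable, with a global flow φ. Assume that for each t the map ζ_t := φ t 0 is differentiable, and that for each x the map t ↦ J_x(t) := D(φ 0 t ·)(x) (the Fréchet derivative of y ↦ φ 0 t y at x) is differentiable with J_x(0) = id and J_x'(t) = (D_x v)(t, φ 0 t x) ∘ J_x(t). Define the time-dependent pullback metric g(t,x)(u,w) := ⟨Dζ_t(x) u, Dζ_t(x) w⟩, where ⟨·,·⟩ is the Euclidean inner product. Then for every solution s of the dynamic equation defined by v and every Jacobi field s̄ along s, one has g(t, s t)(s̄ t, s̄ t) = ‖s̄ 0‖² for all t ∈ ℝ; in particular t ↦ g(t, s t)(s̄ t, s̄ t) is constant, i.e. the covariant Lyapunov tensor of g vanishes along every solution. -/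
/-!
Every solution is a flow line `t ↦ φ 0 t x`, and by uniqueness for the linear variation
equation every Jacobi field along it is `s̄ t = J_x(t) (s̄ 0)`. Uniqueness also gives
`φ t 0 ∘ φ 0 t = id`, so by the chain rule `Dζ_t (φ 0 t x) ∘ J_x(t) = id`; hence
`Dζ_t (s t) (s̄ t) = s̄ 0` and `g(t, s t)(s̄ t, s̄ t) = ‖s̄ 0‖²`.
-/

open Function

variable {E : Type*} [NormedAddCommGroup E] [InnerProductSpace ℝ E]
  [FiniteDimensional ℝ E]

/-- `φ` is a global flow for the time-dependent vector field `v`. -/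
def IsGlobalFlow (v : ℝ → E → E) (φ : ℝ → ℝ → E → E) : Prop :=
  ∀ (t₀ : ℝ) (x : E), φ t₀ t₀ x = x ∧ IsSolution v (fun t => φ t₀ t x)

open Set Filter Topology

/-- Lipschitz in space, locally uniformly in time: the hypothesis of Picard–Lindelöf uniqueness. -/
def LocallyLipschitzInSpace {F : Type*} [PseudoEMetricSpace F] (v : ℝ → F → F) : Prop :=
  ∀ (t₁ : ℝ) (x₀ : F), ∃ K, ∃ V ∈ 𝓝 x₀, ∀ᶠ t in 𝓝 t₁, LipschitzOnWith K (v t) V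

namespace LocallyLipschitzInSpace

theorem of_locallyLipschitz_uncurry {F : Type*} [PseudoEMetricSpace F] {v : ℝ → F → F}
    (hv : LocallyLipschitz (uncurry v)) : LocallyLipschitzInSpace v := by
  intro t₁ x₀
  obtain ⟨K, W, hW, hlip⟩ := hv (t₁, x₀)
  obtain ⟨U, hU, V, hV, hUV⟩ := mem_nhds_prod_iff.1 hW
  refine ⟨K * 1, V, hV, eventually_of_mem hU fun t ht => ?_⟩
  exact hlip.comp (LipschitzWith.prodMk_left t).lipschitzOnWith
    fun x hx => hUV (mk_mem_prod ht hx)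

variable {F : Type*} [NormedAddCommGroup F] [NormedSpace ℝ F]

theorem of_continuous_clm {A : ℝ → F →L[ℝ] F} (hA : Continuous A) :
    LocallyLipschitzInSpace fun t => A t := by
  intro t₁ _
  refine ⟨‖A t₁‖₊ + 1, univ, univ_mem, ?_⟩
  filter_upwards [(continuous_nnnorm.comp hA).continuousAt.eventually_lt continuousAt_const
    (lt_add_one ‖A t₁‖₊)] with t ht
  exact ((A t).lipschitz.weaken ht.le).lipschitzOnWith

/-- The set where two solutions agree is open by local uniqueness and closed by continuity,
hence everything. -/
theorem eq_of_hasDerivAt {v : ℝ → F → F} (hv : LocallyLipschitzInSpace v) {f g : ℝ → F}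
    (hf : ∀ t, HasDerivAt f (v t (f t)) t) (hg : ∀ t, HasDerivAt g (v t (g t)) t)
    {t₀ : ℝ} (heq : f t₀ = g t₀) : f = g := by
  have hclosed : IsClosed {t | f t = g t} :=
    isClosed_eq (continuous_iff_continuousAt.2 fun t => (hf t).continuousAt)
      (continuous_iff_continuousAt.2 fun t => (hg t).continuousAt)
  have hopen : IsOpen {t | f t = g t} := by
    refine isOpen_iff_mem_nhds.2 fun t₁ (ht₁ : f t₁ = g t₁) => ?_
    obtain ⟨K, V, hV, hlip⟩ := hv t₁ (f t₁)
    have hfV := (hf t₁).continuousAt.preimage_mem_nhds hV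
    have hgV := (hg t₁).continuousAt.preimage_mem_nhds (ht₁ ▸ hV)
    exact ODE_solution_unique_of_eventually (s := fun _ => V) hlip
      ((Eventually.of_forall hf).and hfV) ((Eventually.of_forall hg).and hgV) ht₁
  have huniv := IsClopen.eq_univ ⟨hclosed, hopen⟩ ⟨t₀, heq⟩
  exact funext fun t => (huniv ▸ mem_univ t : t ∈ {t | f t = g t})

end LocallyLipschitzInSpace

theorem fderiv_comp_fderiv_of_leftInverse {𝕜 E F : Type*} [NontriviallyNormedField 𝕜]
    [NormedAddCommGroup E] [NormedSpace 𝕜 E] [NormedAddCommGroup F] [NormedSpace 𝕜 F]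
    {f : E → F} {g : F → E} (hgf : LeftInverse g f) {x : E}
    (hg : DifferentiableAt 𝕜 g (f x)) (hf : DifferentiableAt 𝕜 f x) :
    (fderiv 𝕜 g (f x)).comp (fderiv 𝕜 f x) = ContinuousLinearMap.id 𝕜 E := by
  rw [← fderiv_comp x hg hf, hgf.comp_eq_id, fderiv_id]

section Flow

variable {F : Type*} [NormedAddCommGroup F] [InnerProductSpace ℝ F] {v : ℝ → F → F}
  {φ : ℝ → ℝ → F → F}

theorem IsSolution.continuous {s : ℝ → F} (hs : IsSolution v s) : Continuous s :=
  continuous_iff_continuousAt.2 fun t => (hs t).continuousAt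

theorem IsGlobalFlow.eq_of_isSolution (hφ : IsGlobalFlow v φ) (hv : LocallyLipschitzInSpace v)
    {s : ℝ → F} (hs : IsSolution v s) (t₀ : ℝ) : s = fun t => φ t₀ t (s t₀) :=
  hv.eq_of_hasDerivAt hs (hφ t₀ (s t₀)).2 (hφ t₀ (s t₀)).1.symm

theorem IsGlobalFlow.apply_apply (hφ : IsGlobalFlow v φ) (hv : LocallyLipschitzInSpace v)
    (a b c : ℝ) (x : F) : φ b c (φ a b x) = φ a c x :=
  (congrFun (hφ.eq_of_isSolution hv (hφ a x).2 b) c).symm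

theorem isJacobiField_zero (s : ℝ → F) : IsJacobiField v s 0 :=
  fun t => by simp

/-- Jacobi fields solve a linear equation whose coefficient `t ↦ D_x v (t, s t)` is continuous. -/
theorem IsJacobiField.eq_of_apply_eq (hv : ContDiff ℝ 1 (uncurry v)) {s j₁ j₂ : ℝ → F}
    (hs : Continuous s) (h₁ : IsJacobiField v s j₁) (h₂ : IsJacobiField v s j₂) {t₀ : ℝ}
    (h : j₁ t₀ = j₂ t₀) : j₁ = j₂ :=
  have hA : Continuous fun t => fderiv ℝ (v t) (s t) :=
    (hv.fderiv (contDiff_zero.2 hs) (zero_add _).le).continuous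
  (LocallyLipschitzInSpace.of_continuous_clm hA).eq_of_hasDerivAt h₁ h₂ h

theorem isJacobiField_fderiv_flow_apply {x : F}
    (hJ : ∀ t, HasDerivAt (fun τ => fderiv ℝ (φ 0 τ) x)
      ((fderiv ℝ (v t) (φ 0 t x)).comp (fderiv ℝ (φ 0 t) x)) t) (w : F) :
    IsJacobiField v (fun t => φ 0 t x) (fun t => fderiv ℝ (φ 0 t) x w) :=
  fun t => by simpa using (hJ t).clm_apply (hasDerivAt_const t w)

theorem IsJacobiField.eq_fderiv_flow_apply (hv : ContDiff ℝ 1 (uncurry v))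
    (hφ : IsGlobalFlow v φ) {x : F} (hJ0 : fderiv ℝ (φ 0 0) x = ContinuousLinearMap.id ℝ F)
    (hJ : ∀ t, HasDerivAt (fun τ => fderiv ℝ (φ 0 τ) x)
      ((fderiv ℝ (v t) (φ 0 t x)).comp (fderiv ℝ (φ 0 t) x)) t)
    {sbar : ℝ → F} (hsbar : IsJacobiField v (fun t => φ 0 t x) sbar) :
    sbar = fun t => fderiv ℝ (φ 0 t) x (sbar 0) :=
  hsbar.eq_of_apply_eq hv (hφ 0 x).2.continuous (isJacobiField_fderiv_flow_apply hJ _)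
    (t₀ := 0) (by rw [hJ0]; rfl)

/-- The chain rule on `φ t 0 ∘ φ 0 t = id`. If `φ 0 t` is not differentiable at `x`, its junk
derivative `0` forces the Jacobi field to vanish identically. -/
theorem IsJacobiField.fderiv_flow_apply_eq (hv : ContDiff ℝ 1 (uncurry v))
    (hφ : IsGlobalFlow v φ) {x : F} (t : ℝ) (hζ : DifferentiableAt ℝ (φ t 0) (φ 0 t x))
    {sbar : ℝ → F} (hsbar : IsJacobiField v (fun t => φ 0 t x) sbar)
    (hsbar_eq : sbar = fun t => fderiv ℝ (φ 0 t) x (sbar 0)) :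
    fderiv ℝ (φ t 0) (φ 0 t x) (sbar t) = sbar 0 := by
  by_cases hd : DifferentiableAt ℝ (φ 0 t) x
  · have hinv : LeftInverse (φ t 0) (φ 0 t) := fun y => by
      rw [hφ.apply_apply (.of_locallyLipschitz_uncurry hv.locallyLipschitz), (hφ 0 y).1]
    rw [congrFun hsbar_eq t]
    exact DFunLike.congr_fun (fderiv_comp_fderiv_of_leftInverse hinv hζ hd) (sbar 0)
  · have hzero : sbar = 0 :=
      hsbar.eq_of_apply_eq hv (hφ 0 x).2.continuous (isJacobiField_zero _) (t₀ := t)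
        (by rw [congrFun hsbar_eq t]; simp [fderiv_zero_of_not_differentiableAt hd])
    simp [hzero]

end Flow

theorem pullback_metric_jacobi_constant_general
    (v : ℝ → E → E) (φ : ℝ → ℝ → E → E)
    (hv : ContDiff ℝ 1 (uncurry v))
    (hφ : IsGlobalFlow v φ)
    (hζ : ∀ t : ℝ, Differentiable ℝ (φ t 0))
    (hJ0 : ∀ x : E, fderiv ℝ (fun y => φ 0 0 y) x = ContinuousLinearMap.id ℝ E)
    (hJ : ∀ (x : E) (t : ℝ),
      HasDerivAt (fun τ => fderiv ℝ (fun y => φ 0 τ y) x)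
        ((fderiv ℝ (v t) (φ 0 t x)).comp (fderiv ℝ (fun y => φ 0 t y) x)) t)
    (g : ℝ → E → E → E → ℝ)
    (hgdef : ∀ (t : ℝ) (x u w : E),
      g t x u w = inner ℝ (fderiv ℝ (φ t 0) x u) (fderiv ℝ (φ t 0) x w))
    (s sbar : ℝ → E) (hs : IsSolution v s) (hsbar : IsJacobiField v s sbar) :
    ∀ t : ℝ, g t (s t) (sbar t) (sbar t) = ‖sbar 0‖ ^ 2 := by
  obtain ⟨x, rfl⟩ : ∃ x, s = fun t => φ 0 t x :=
    ⟨s 0, hφ.eq_of_isSolution (.of_locallyLipschitz_uncurry hv.locallyLipschitz) hs 0⟩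
  have hsbar_eq := hsbar.eq_fderiv_flow_apply hv hφ (hJ0 x) (hJ x)
  intro t
  rw [hgdef, hsbar.fderiv_flow_apply_eq hv hφ t (hζ t _) hsbar_eq, real_inner_self_eq_norm_sq]

/-- Pulling back the Euclidean metric by the initial-date trivialization
`ζ_t = φ t 0` produces a time-dependent metric
`g(t,x)(u,w) = ⟨Dζ_t(x) u, Dζ_t(x) w⟩` for which `g(t, s t)(s̄ t, s̄ t)` is
constantly `‖s̄ 0‖²` along every solution `s` and Jacobi field `s̄`; i.e. the
covariant Lyapunov tensor of this metric vanishes along every solution. -/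
theorem pullback_metric_jacobi_constant
    (v : ℝ → E → E) (φ : ℝ → ℝ → E → E)
    (hv : ContDiff ℝ 1 (uncurry v))
    (hv_lip : ∀ t : ℝ, LocallyLipschitz (v t))
    (hφ : IsGlobalFlow v φ)
    (hζ : ∀ t : ℝ, Differentiable ℝ (φ t 0))
    (hJ0 : ∀ x : E, fderiv ℝ (fun y => φ 0 0 y) x = ContinuousLinearMap.id ℝ E)
    (hJ : ∀ (x : E) (t : ℝ),
      HasDerivAt (fun τ => fderiv ℝ (fun y => φ 0 τ y) x)
        ((fderiv ℝ (v t) (φ 0 t x)).comp (fderiv ℝ (fun y => φ 0 t y) x)) t)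
    (g : ℝ → E → E → E → ℝ)
    (hgdef : ∀ (t : ℝ) (x u w : E),
      g t x u w = inner ℝ (fderiv ℝ (φ t 0) x u) (fderiv ℝ (φ t 0) x w))
    (s sbar : ℝ → E) (hs : IsSolution v s) (hsbar : IsJacobiField v s sbar) :
    ∀ t : ℝ, g t (s t) (sbar t) (sbar t) = ‖sbar 0‖ ^ 2 :=
  pullback_metric_jacobi_constant_general v φ hv hφ hζ hJ0 hJ g hgdef s sbar hs hsbar
end

section
/- Let g : ℝ × ℝⁿ → (symmetric continuous bilinear forms on ℝⁿ) be C¹ and let u ∈ ℝⁿ, u ≠ 0. Assume that for every t ≥ 0 and every τ ∈ [0,1], the bilinear form (∂_t g)(t, τ • u) is negative definite (i.e. (∂_t g)(t, τ • u)(w,w) < 0 for every w ≠ 0). Then the function F(t) := ∫₀¹ g(t, τ • u)(u, u) dτ is strictly decreasing on [0, ∞): for all 0 ≤ t < t', F(t') < F(t). -/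
/-!
For each `τ ∈ [0,1]`, the time derivative of `s ↦ g(s, τ • u)(u, u)` is `(∂ₜ g)(s, τ • u)(u, u) < 0`,
so this function is strictly decreasing on `[0, ∞)`; integrating the resulting strict inequality
between continuous functions of `τ` over `[0,1]` keeps it strict.
-/

open Function intervalIntegral

theorem HasDerivAt.clm_apply_apply {𝕜 E F G : Type*} [NontriviallyNormedField 𝕜]
    [NormedAddCommGroup E] [NormedSpace 𝕜 E] [NormedAddCommGroup F] [NormedSpace 𝕜 F]
    [NormedAddCommGroup G] [NormedSpace 𝕜 G]
    {φ : 𝕜 → E →L[𝕜] F →L[𝕜] G} {φ' : E →L[𝕜] F →L[𝕜] G} {s : 𝕜}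
    (h : HasDerivAt φ φ' s) (v : E) (w : F) : HasDerivAt (fun s => φ s v w) (φ' v w) s := by
  simpa using (h.clm_apply (hasDerivAt_const s v)).clm_apply (hasDerivAt_const s w)

theorem strictAntiOn_clm_apply_apply_of_deriv_neg {E F : Type*}
    [NormedAddCommGroup E] [NormedSpace ℝ E] [NormedAddCommGroup F] [NormedSpace ℝ F]
    {φ : ℝ → E →L[ℝ] F →L[ℝ] ℝ} {D : Set ℝ} (hD : Convex ℝ D) (hφ : Differentiable ℝ φ)
    (v : E) (w : F) (hneg : ∀ s ∈ interior D, deriv φ s v w < 0) :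
    StrictAntiOn (fun s => φ s v w) D := by
  have hderiv (s : ℝ) : HasDerivAt (fun s => φ s v w) (deriv φ s v w) s :=
    ((hφ s).hasDerivAt (𝕜 := ℝ) (F := E →L[ℝ] F →L[ℝ] ℝ)).clm_apply_apply v w
  refine strictAntiOn_of_deriv_neg hD (fun s _ => (hderiv s).continuousAt.continuousWithinAt) ?_
  intro s hs
  rw [(hderiv s).deriv]
  exact hneg s hs

theorem segment_energy_strictAnti_general
    {E : Type*} [NormedAddCommGroup E] [InnerProductSpace ℝ E]
    (g : ℝ → E → (E →L[ℝ] E →L[ℝ] ℝ))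
    (hg : ContDiff ℝ 1 (uncurry g))
    (u : E) (hu : u ≠ 0)
    (hneg : ∀ t : ℝ, 0 ≤ t → ∀ τ ∈ Set.Icc (0:ℝ) 1, ∀ w : E, w ≠ 0 →
      deriv (fun t' => g t' (τ • u)) t w w < 0) :
    ∀ t t' : ℝ, 0 ≤ t → t < t' →
      (∫ τ in (0:ℝ)..1, g t' (τ • u) u u) < ∫ τ in (0:ℝ)..1, g t (τ • u) u u := by
  intro t t' ht htt'
  have hdecr : ∀ τ ∈ Set.Icc (0:ℝ) 1, g t' (τ • u) u u < g t (τ • u) u u := by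
    intro τ hτ
    have hsection : Differentiable ℝ fun s => g s (τ • u) :=
      (hg.differentiable one_ne_zero).comp (𝕜 := ℝ) (G := E →L[ℝ] E →L[ℝ] ℝ)
        (differentiable_id.prodMk (differentiable_const (τ • u)))
    have hanti := strictAntiOn_clm_apply_apply_of_deriv_neg (convex_Ici 0) hsection u u
      (fun s hs => hneg s (interior_subset hs) τ hτ u hu)
    exact hanti ht (ht.trans htt'.le) htt'
  have hcont (s : ℝ) : ContinuousOn (fun τ : ℝ => g s (τ • u) u u) (Set.Icc 0 1) := by
    have hsegment : Continuous fun τ : ℝ => g s (τ • u) :=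
      hg.continuous.comp (by fun_prop : Continuous fun τ : ℝ => (s, τ • u))
    exact ((hsegment.clm_apply continuous_const).clm_apply continuous_const).continuousOn
  exact integral_lt_integral_of_continuousOn_of_le_of_exists_lt zero_lt_one (hcont t') (hcont t)
    (fun τ hτ => (hdecr τ (Set.Ioc_subset_Icc_self hτ)).le) ⟨0, by simp, hdecr 0 (by simp)⟩

/-- If the time derivative `∂ₜ g` of a C¹ time-dependent metric `g` is
negative definite at all points of the segment `τ • u`, `τ ∈ [0,1]`, at all
times `t ≥ 0`, then the segment energy `F(t) = ∫₀¹ g(t, τ • u)(u, u) dτ`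
is strictly decreasing on `[0, ∞)`. -/
theorem segment_energy_strictAnti
    {E : Type*} [NormedAddCommGroup E] [InnerProductSpace ℝ E]
    [FiniteDimensional ℝ E]
    (g : ℝ → E → (E →L[ℝ] E →L[ℝ] ℝ))
    (hg : ContDiff ℝ 1 (uncurry g))
    (hgsym : ∀ (t : ℝ) (x u w : E), g t x u w = g t x w u)
    (u : E) (hu : u ≠ 0)
    (hneg : ∀ t : ℝ, 0 ≤ t → ∀ τ ∈ Set.Icc (0:ℝ) 1, ∀ w : E, w ≠ 0 →
      deriv (fun t' => g t' (τ • u)) t w w < 0) :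
    ∀ t t' : ℝ, 0 ≤ t → t < t' →
      (∫ τ in (0:ℝ)..1, g t' (τ • u) u u) < ∫ τ in (0:ℝ)..1, g t (τ • u) u u :=
  segment_energy_strictAnti_general g hg u hu hneg
end
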